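/- arXiv:2307.14319 — 6 statements merged into one kernel-verified Lean document; each statement's English description precedes it below -/
import Mathlib

section
/- Let ε > 0, c > 0, Q : ℝ → (0,∞), and (t_n)_{n∈ℤ} strictly increasing with t_{n+1} − t_n ≥ c for all n. Define p(n) := ε · inf { e^{ε(t_m − t_n)} Q(t_m) : m ≥ n }. If limsup_{n→+∞} p(n) > 0, then the set { n > 0 : p(n) = ε·Q(t_n) } is infinite. -/
open Filter

/-- If the ℤ-indexed stable parameter `p` has positive `limsup` at `+∞`, then the
maximality case `p(n) = ε·Q(t_n)` occurs for infinitely many `n > 0`. -/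
theorem maximality_infinitely_often (ε c : ℝ) (hε : 0 < ε) (hc : 0 < c)
    (Q : ℝ → ℝ) (hQ : ∀ t, 0 < Q t)
    (t : ℤ → ℝ) (ht : StrictMono t) (hgap : ∀ n : ℤ, c ≤ t (n + 1) - t n)
    (p : ℤ → ℝ)
    (hp : ∀ n : ℤ, p n = ε * sInf {y : ℝ | ∃ m : ℤ, n ≤ m ∧
      y = Real.exp (ε * (t m - t n)) * Q (t m)})
    (hlimsup : 0 < Filter.limsup p Filter.atTop) :
    {n : ℤ | 0 < n ∧ p n = ε * Q (t n)}.Infinite := by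
  by_contra hfin
  rw [Set.not_infinite] at hfin
  obtain ⟨N, hN⟩ := hfin.bddAbove
  set S : ℤ → Set ℝ := fun n => {y : ℝ | ∃ m : ℤ, n ≤ m ∧
      y = Real.exp (ε * (t m - t n)) * Q (t m)} with hSdef
  have hne : ∀ n, (S n).Nonempty := fun n => ⟨_, n, le_refl n, rfl⟩
  have hbdd : ∀ n, BddBelow (S n) := by
    intro n
    refine ⟨0, ?_⟩
    rintro y ⟨m, hm, rfl⟩
    exact (mul_pos (Real.exp_pos _) (hQ _)).le
  have hp0 : ∀ n, 0 ≤ p n := by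
    intro n
    rw [hp n]
    have h1 : (0:ℝ) ≤ sInf (S n) := by
      apply le_csInf (hne n)
      rintro y ⟨m, hm, rfl⟩
      exact (mul_pos (Real.exp_pos _) (hQ _)).le
    exact mul_nonneg hε.le h1
  have hple : ∀ n, p n ≤ ε * Q (t n) := by
    intro n
    rw [hp n]
    have hmem : Real.exp (ε * (t n - t n)) * Q (t n) ∈ S n := ⟨n, le_refl n, rfl⟩
    have h1 : sInf (S n) ≤ Q (t n) := by
      have := csInf_le (hbdd n) hmem
      simpa using this
    exact mul_le_mul_of_nonneg_left h1 hε.le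
  -- key step
  have key : ∀ n : ℤ, p n ≠ ε * Q (t n) → Real.exp (ε * c) * p (n + 1) ≤ p n := by
    intro n hne'
    have hlt : sInf (S n) < Q (t n) := by
      have h1 : p n < ε * Q (t n) := lt_of_le_of_ne (hple n) hne'
      rw [hp n] at h1
      exact lt_of_mul_lt_mul_left h1 hε.le
    have hlb : ∀ y ∈ S n, min (Q (t n)) (Real.exp (ε * c) * sInf (S (n + 1))) ≤ y := by
      rintro y ⟨m, hm, rfl⟩
      rcases eq_or_lt_of_le hm with heq | hlt'
      · rw [← heq]
        simp only [sub_self, mul_zero, Real.exp_zero, one_mul]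
        exact min_le_left _ _
      · have hm1 : n + 1 ≤ m := hlt'
        have hmem1 : Real.exp (ε * (t m - t (n + 1))) * Q (t m) ∈ S (n + 1) :=
          ⟨m, hm1, rfl⟩
        have h2 := csInf_le (hbdd (n + 1)) hmem1
        calc min (Q (t n)) (Real.exp (ε * c) * sInf (S (n + 1)))
            ≤ Real.exp (ε * c) * sInf (S (n + 1)) := min_le_right _ _
          _ ≤ Real.exp (ε * c) * (Real.exp (ε * (t m - t (n + 1))) * Q (t m)) :=
              mul_le_mul_of_nonneg_left h2 (Real.exp_pos _).le
          _ = Real.exp (ε * c + ε * (t m - t (n + 1))) * Q (t m) := by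
              rw [Real.exp_add]; ring
          _ ≤ Real.exp (ε * (t m - t n)) * Q (t m) := by
              apply mul_le_mul_of_nonneg_right _ (hQ _).le
              apply Real.exp_le_exp.2
              have := hgap n
              nlinarith
    have hmin : min (Q (t n)) (Real.exp (ε * c) * sInf (S (n + 1))) ≤ sInf (S n) :=
      le_csInf (hne n) hlb
    have h3 : Real.exp (ε * c) * sInf (S (n + 1)) ≤ sInf (S n) := by
      rcases min_cases (Q (t n)) (Real.exp (ε * c) * sInf (S (n + 1))) with ⟨he, h'⟩ | ⟨he, h'⟩
      · rw [he] at hmin; linarith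
      · rw [he] at hmin; exact hmin
    rw [hp n, hp (n + 1)]
    nlinarith [Real.exp_pos (ε * c)]
  -- set up the decay
  set N₁ : ℤ := max N 0 + 1 with hN₁
  have hstep : ∀ n : ℤ, N₁ ≤ n → p (n + 1) ≤ Real.exp (-(ε * c)) * p n := by
    intro n hn
    have hnpos : 0 < n := by
      have : (0:ℤ) ≤ max N 0 := le_max_right _ _
      omega
    have hnN : ¬ n ≤ N := by
      have : N ≤ max N 0 := le_max_left _ _
      omega
    have hne' : p n ≠ ε * Q (t n) := by
      intro h
      exact hnN (hN ⟨hnpos, h⟩)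
    have := key n hne'
    have hepos := Real.exp_pos (ε * c)
    have h4 : Real.exp (-(ε * c)) * (Real.exp (ε * c) * p (n + 1)) ≤
        Real.exp (-(ε * c)) * p n :=
      mul_le_mul_of_nonneg_left this (Real.exp_pos _).le
    have h5 : Real.exp (-(ε * c)) * Real.exp (ε * c) = 1 := by
      rw [← Real.exp_add]; simp
    calc p (n + 1) = Real.exp (-(ε * c)) * (Real.exp (ε * c) * p (n + 1)) := by
          rw [← mul_assoc, h5, one_mul]
      _ ≤ Real.exp (-(ε * c)) * p n := h4
  have hind : ∀ k : ℕ, p (N₁ + k) ≤ Real.exp (-(ε * c)) ^ k * p N₁ := by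
    intro k
    induction k with
    | zero => simp
    | succ k ih =>
      have h1 : p (N₁ + (k + 1) : ℤ) = p ((N₁ + k) + 1) := by ring_nf
      have h2 := hstep (N₁ + k) (by omega)
      calc p (N₁ + (k + 1) : ℤ) = p ((N₁ + k) + 1) := h1
        _ ≤ Real.exp (-(ε * c)) * p (N₁ + k) := h2
        _ ≤ Real.exp (-(ε * c)) * (Real.exp (-(ε * c)) ^ k * p N₁) :=
            mul_le_mul_of_nonneg_left ih (Real.exp_pos _).le
        _ = Real.exp (-(ε * c)) ^ (k + 1) * p N₁ := by ring
  -- the bound tends to zero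
  have hr1 : Real.exp (-(ε * c)) < 1 := by
    rw [Real.exp_lt_one_iff]
    nlinarith
  have hgnat : Tendsto (fun k : ℕ => Real.exp (-(ε * c)) ^ k * p N₁) atTop (nhds 0) := by
    have h0 : Tendsto (fun k : ℕ => Real.exp (-(ε * c)) ^ k) atTop (nhds 0) :=
      tendsto_pow_atTop_nhds_zero_of_lt_one (Real.exp_pos _).le hr1
    simpa using h0.mul_const (p N₁)
  have htoNat : Tendsto (fun n : ℤ => (n - N₁).toNat) atTop atTop := by
    exact tendsto_atTop_atTop.2 fun b => ⟨N₁ + b, fun n hn => by omega⟩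
  have hg : Tendsto (fun n : ℤ => Real.exp (-(ε * c)) ^ (n - N₁).toNat * p N₁)
      atTop (nhds 0) := hgnat.comp htoNat
  have hev : ∀ᶠ n : ℤ in atTop, p n ≤ Real.exp (-(ε * c)) ^ (n - N₁).toNat * p N₁ := by
    filter_upwards [eventually_ge_atTop N₁] with n hn
    have heq : N₁ + ((n - N₁).toNat : ℤ) = n := by
      rw [Int.toNat_of_nonneg (by omega)]; ring
    have := hind (n - N₁).toNat
    rwa [heq] at this
  have hp0' : ∀ᶠ n : ℤ in atTop, (0:ℝ) ≤ p n := Eventually.of_forall hp0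
  have htend : Tendsto p atTop (nhds 0) :=
    tendsto_of_tendsto_of_tendsto_of_le_of_le' tendsto_const_nhds hg hp0' hev
  have : limsup p atTop = 0 := htend.limsup_eq
  rw [this] at hlimsup
  exact lt_irrefl 0 hlimsup
end

section
/- Let 0 < ε < 1/4, 0 < T < 1/4, and positive real numbers p^s, p^u, q^s, q^u, a, b such that p^s < ε, q^u < ε, p^u ≤ a, q^s ≤ b, and such that: e^{−ε p^s} · min{e^{εT} q^s, e^{−ε} a} ≤ p^s ≤ min{e^{εT} q^s, a}, and e^{−ε q^u} · min{e^{εT} p^u, e^{−ε} b} ≤ q^u ≤ min{e^{εT} p^u, b}. Then e^{−2ε} ≤ min(p^s, p^u) / min(q^s, q^u) ≤ e^{2ε}. -/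
lemma exp_shift_aux {c d x y : ℝ} (hy : 0 ≤ y) (h : Real.exp (-c) * x ≤ y)
    (hcd : c ≤ d) : x ≤ Real.exp d * y := by
  have h' := mul_le_mul_of_nonneg_left h (Real.exp_pos c).le
  rw [← mul_assoc, ← Real.exp_add] at h'
  simp only [add_neg_cancel, Real.exp_zero, one_mul] at h'
  calc x ≤ Real.exp c * y := h'
    _ ≤ Real.exp d * y := mul_le_mul_of_nonneg_right (Real.exp_le_exp.2 hcd) hy

/-- Comparability of the minimal parameters of consecutive ε-double charts under
the edge condition (GPO2). -/
theorem gpo2_min_comparable (ε T ps pu qs qu a b : ℝ)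
    (hε0 : 0 < ε) (hε : ε < 1/4) (hT0 : 0 < T) (hT : T < 1/4)
    (hps : 0 < ps) (hpu : 0 < pu) (hqs : 0 < qs) (hqu : 0 < qu)
    (ha : 0 < a) (hb : 0 < b)
    (hpsε : ps < ε) (hquε : qu < ε) (hpua : pu ≤ a) (hqsb : qs ≤ b)
    (h1 : Real.exp (-(ε * ps)) * min (Real.exp (ε * T) * qs) (Real.exp (-ε) * a) ≤ ps)
    (h2 : ps ≤ min (Real.exp (ε * T) * qs) a)
    (h3 : Real.exp (-(ε * qu)) * min (Real.exp (ε * T) * pu) (Real.exp (-ε) * b) ≤ qu)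
    (h4 : qu ≤ min (Real.exp (ε * T) * pu) b) :
    Real.exp (-(2 * ε)) ≤ min ps pu / min qs qu ∧
    min ps pu / min qs qu ≤ Real.exp (2 * ε) := by
  have h2a : ps ≤ Real.exp (ε * T) * qs := le_trans h2 (min_le_left _ _)
  have h4a : qu ≤ Real.exp (ε * T) * pu := le_trans h4 (min_le_left _ _)
  have hminp : (0:ℝ) < min ps pu := lt_min hps hpu
  have hminq : (0:ℝ) < min qs qu := lt_min hqs hqu
  have hTε : ε * T ≤ 2 * ε := by nlinarith [mul_pos hε0 hT0]
  -- e^{-(εT)} * ps ≤ qs and e^{-(εT)} * qu ≤ pu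
  have hps_qs : Real.exp (-(ε * T)) * ps ≤ qs := by
    have := mul_le_mul_of_nonneg_left h2a (Real.exp_pos (-(ε * T))).le
    rwa [← mul_assoc, ← Real.exp_add, neg_add_cancel, Real.exp_zero, one_mul] at this
  have hqu_pu : Real.exp (-(ε * T)) * qu ≤ pu := by
    have := mul_le_mul_of_nonneg_left h4a (Real.exp_pos (-(ε * T))).le
    rwa [← mul_assoc, ← Real.exp_add, neg_add_cancel, Real.exp_zero, one_mul] at this
  -- key1 : min ps pu ≤ e^{2ε} * min qs qu
  have key1 : min ps pu ≤ Real.exp (2 * ε) * min qs qu := by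
    rw [mul_min_of_nonneg _ _ (Real.exp_pos _).le]
    apply le_min
    · calc min ps pu ≤ ps := min_le_left _ _
        _ ≤ Real.exp (ε * T) * qs := h2a
        _ ≤ Real.exp (2 * ε) * qs :=
            mul_le_mul_of_nonneg_right (Real.exp_le_exp.2 hTε) hqs.le
    · -- use h3
      have hM : Real.exp (-(ε + ε * T)) * min ps pu ≤
          min (Real.exp (ε * T) * pu) (Real.exp (-ε) * b) := by
        apply le_min
        · calc Real.exp (-(ε + ε * T)) * min ps pu ≤ 1 * pu := by
                apply mul_le_mul _ (min_le_right _ _) hminp.le zero_le_one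
                rw [Real.exp_le_one_iff]; nlinarith [mul_pos hε0 hT0]
            _ = pu := one_mul pu
            _ ≤ Real.exp (ε * T) * pu := by
                nlinarith [Real.one_le_exp (by positivity : (0:ℝ) ≤ ε * T)]
        · calc Real.exp (-(ε + ε * T)) * min ps pu
              ≤ Real.exp (-(ε + ε * T)) * ps :=
                mul_le_mul_of_nonneg_left (min_le_left _ _) (Real.exp_pos _).le
            _ = Real.exp (-ε) * (Real.exp (-(ε * T)) * ps) := by
                rw [← mul_assoc, ← Real.exp_add]; ring_nf
            _ ≤ Real.exp (-ε) * qs :=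
                mul_le_mul_of_nonneg_left hps_qs (Real.exp_pos _).le
            _ ≤ Real.exp (-ε) * b :=
                mul_le_mul_of_nonneg_left hqsb (Real.exp_pos _).le
      have hchain : Real.exp (-(ε * qu + (ε + ε * T))) * min ps pu ≤ qu := by
        calc Real.exp (-(ε * qu + (ε + ε * T))) * min ps pu
            = Real.exp (-(ε * qu)) * (Real.exp (-(ε + ε * T)) * min ps pu) := by
              rw [← mul_assoc, ← Real.exp_add]; ring_nf
          _ ≤ Real.exp (-(ε * qu)) *
              min (Real.exp (ε * T) * pu) (Real.exp (-ε) * b) :=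
              mul_le_mul_of_nonneg_left hM (Real.exp_pos _).le
          _ ≤ qu := h3
      exact exp_shift_aux hqu.le hchain (by linarith [mul_lt_mul_of_pos_left hquε hε0, mul_lt_mul_of_pos_left hε hε0, mul_lt_mul_of_pos_left hT hε0])
  -- key2 : min qs qu ≤ e^{2ε} * min ps pu
  have key2 : min qs qu ≤ Real.exp (2 * ε) * min ps pu := by
    rw [mul_min_of_nonneg _ _ (Real.exp_pos _).le]
    apply le_min
    · -- use h1
      have hM : Real.exp (-(ε + ε * T)) * min qs qu ≤
          min (Real.exp (ε * T) * qs) (Real.exp (-ε) * a) := by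
        apply le_min
        · calc Real.exp (-(ε + ε * T)) * min qs qu ≤ 1 * qs := by
                apply mul_le_mul _ (min_le_left _ _) hminq.le zero_le_one
                rw [Real.exp_le_one_iff]; nlinarith [mul_pos hε0 hT0]
            _ = qs := one_mul qs
            _ ≤ Real.exp (ε * T) * qs := by
                nlinarith [Real.one_le_exp (by positivity : (0:ℝ) ≤ ε * T)]
        · calc Real.exp (-(ε + ε * T)) * min qs qu
              ≤ Real.exp (-(ε + ε * T)) * qu :=
                mul_le_mul_of_nonneg_left (min_le_right _ _) (Real.exp_pos _).le
            _ = Real.exp (-ε) * (Real.exp (-(ε * T)) * qu) := by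
                rw [← mul_assoc, ← Real.exp_add]; ring_nf
            _ ≤ Real.exp (-ε) * pu :=
                mul_le_mul_of_nonneg_left hqu_pu (Real.exp_pos _).le
            _ ≤ Real.exp (-ε) * a :=
                mul_le_mul_of_nonneg_left hpua (Real.exp_pos _).le
      have hchain : Real.exp (-(ε * ps + (ε + ε * T))) * min qs qu ≤ ps := by
        calc Real.exp (-(ε * ps + (ε + ε * T))) * min qs qu
            = Real.exp (-(ε * ps)) * (Real.exp (-(ε + ε * T)) * min qs qu) := by
              rw [← mul_assoc, ← Real.exp_add]; ring_nf
          _ ≤ Real.exp (-(ε * ps)) *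
              min (Real.exp (ε * T) * qs) (Real.exp (-ε) * a) :=
              mul_le_mul_of_nonneg_left hM (Real.exp_pos _).le
          _ ≤ ps := h1
      have hps' : min qs qu ≤ Real.exp (2 * ε) * ps :=
        exp_shift_aux hps.le hchain (by linarith [mul_lt_mul_of_pos_left hpsε hε0, mul_lt_mul_of_pos_left hε hε0, mul_lt_mul_of_pos_left hT hε0])
      exact hps'
    · calc min qs qu ≤ qu := min_le_right _ _
        _ ≤ Real.exp (ε * T) * pu := h4a
        _ ≤ Real.exp (2 * ε) * pu :=
            mul_le_mul_of_nonneg_right (Real.exp_le_exp.2 hTε) hpu.le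
  constructor
  · rw [le_div_iff₀ hminq, Real.exp_neg, inv_mul_le_iff₀ (Real.exp_pos _)]
    exact key2
  · rw [div_le_iff₀ hminq]
    exact key1
end

section
/- Let H be a finite-dimensional real inner product space of dimension ≥ 2, let f : H → ℝ be a nonzero linear functional, and let v ∈ H be a vector with f(v) = 1. Let P : H → H be the projection onto K := ker f along v, i.e. P(x) := x − f(x)·v. Let θ ∈ [0, π/2) be determined by cos θ = |⟨v/‖v‖, w⟩| where w is a unit vector orthogonal to K. Then the operator norm of P equals 1 / cos θ. -/
/-!
Let `w` be the unit normal of `K` and `a = ⟪w, v⟫`. Since `x - f x • v ∈ K`, we get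
`⟪w, x⟫ = a f x`, so `a ≠ 0` and `P x = x - ⟪w, x⟫ • z` with `z = a⁻¹ • v`, `⟪w, z⟫ = 1` and
`‖z‖ = ‖v‖ / |a| = 1 / cos θ`. It remains to show that such an oblique projection has norm `‖z‖`.
Write `z = w + u` with `u ⊥ w`, so `‖z‖² = 1 + ‖u‖²`, and `x = k + t • w` with `k ⊥ w`; then
`P x = k - t • u`, and Cauchy–Schwarz for `(‖k‖, |t|)` and `(1, ‖u‖)` gives `‖P x‖ ≤ ‖z‖ ‖x‖`.
For equality pick a unit `y ⊥ w` with `u = c • y`: then `P (y - c • w) = (1 + c²) • y` while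
`‖y - c • w‖ = ‖z‖ = √(1 + c²)`.
-/

open RealInnerProductSpace

section ObliqueProjection

variable {E : Type*} [NormedAddCommGroup E] [InnerProductSpace ℝ E]

theorem inner_eq_apply_mul_inner_of_mem_orthogonal_ker {f : E →ₗ[ℝ] ℝ} {v w : E}
    (hfv : f v = 1) (hw : w ∈ (LinearMap.ker f)ᗮ) (x : E) : ⟪w, x⟫ = f x * ⟪w, v⟫ := by
  have hker : x - f x • v ∈ LinearMap.ker f := by simp [hfv]
  have h := Submodule.inner_left_of_mem_orthogonal hker hw
  rw [inner_sub_right, real_inner_smul_right] at h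
  linarith

theorem norm_sub_inner_smul_le {w z : E} (hw : ‖w‖ = 1) (hwz : ⟪w, z⟫ = 1) (x : E) :
    ‖x - ⟪w, x⟫ • z‖ ≤ ‖z‖ * ‖x‖ := by
  set t := ⟪w, x⟫
  set k := x - t • w
  set u := z - w
  have hww : ⟪w, w⟫ = 1 := by rw [real_inner_self_eq_norm_sq, hw, one_pow]
  have hwk : ⟪w, k⟫ = 0 := by simp only [k, inner_sub_right, real_inner_smul_right, hww]; ring
  have hwu : ⟪w, u⟫ = 0 := by simp only [u, inner_sub_right, hwz, hww]; ring
  have hx : ‖x‖ ^ 2 = ‖k‖ ^ 2 + t ^ 2 := by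
    rw [show x = k + t • w by simp [k], norm_add_sq_real, real_inner_smul_right,
      real_inner_comm, hwk, norm_smul, hw, Real.norm_eq_abs]
    ring_nf
    rw [sq_abs]
  have hz : ‖z‖ ^ 2 = 1 + ‖u‖ ^ 2 := by
    rw [show z = w + u by simp [u], norm_add_sq_real, hwu, hw]
    ring
  have hPx : ‖x - t • z‖ ≤ ‖k‖ + |t| * ‖u‖ := by
    calc ‖x - t • z‖ = ‖k - t • u‖ := by congr 1; simp only [k, u, smul_sub]; abel
      _ ≤ ‖k‖ + |t| * ‖u‖ := by rw [← Real.norm_eq_abs, ← norm_smul]; exact norm_sub_le _ _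
  have hCS : (‖k‖ + |t| * ‖u‖) ^ 2 ≤ (‖z‖ * ‖x‖) ^ 2 := by
    rw [mul_pow, hz, hx, ← sq_abs t]
    nlinarith [sq_nonneg (‖k‖ * ‖u‖ - |t|)]
  exact hPx.trans (pow_le_pow_iff_left₀ (by positivity) (by positivity) two_ne_zero |>.mp hCS)

theorem exists_norm_eq_one_inner_eq_zero [FiniteDimensional ℝ E] (hE : 2 ≤ Module.finrank ℝ E)
    (w : E) : ∃ y : E, ‖y‖ = 1 ∧ ⟪w, y⟫ = 0 := by
  have hpos : 0 < Module.finrank ℝ (ℝ ∙ w)ᗮ := by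
    have := (ℝ ∙ w).finrank_add_finrank_orthogonal
    have : Module.finrank ℝ (ℝ ∙ w) ≤ 1 := (finrank_span_le_card ({w} : Set E)).trans (by simp)
    omega
  obtain ⟨⟨y, hy⟩, hy0⟩ := Module.finrank_pos_iff_exists_ne_zero.mp hpos
  have hy0 : y ≠ 0 := fun h => hy0 (Subtype.ext h)
  refine ⟨‖y‖⁻¹ • y, norm_smul_inv_norm hy0, ?_⟩
  rw [real_inner_smul_right, Submodule.mem_orthogonal_singleton_iff_inner_right.mp hy, mul_zero]

theorem exists_eq_add_smul_of_inner_eq_one [FiniteDimensional ℝ E]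
    (hE : 2 ≤ Module.finrank ℝ E) {w z : E} (hw : ‖w‖ = 1) (hwz : ⟪w, z⟫ = 1) :
    ∃ (y : E) (c : ℝ), ‖y‖ = 1 ∧ ⟪w, y⟫ = 0 ∧ z = w + c • y := by
  have hwu : ⟪w, z - w⟫ = 0 := by
    rw [inner_sub_right, hwz, real_inner_self_eq_norm_sq, hw]; norm_num
  by_cases hu : z - w = 0
  · obtain ⟨y, hy, hwy⟩ := exists_norm_eq_one_inner_eq_zero hE w
    exact ⟨y, 0, hy, hwy, by rw [zero_smul, add_zero, ← sub_eq_zero, hu]⟩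
  · refine ⟨‖z - w‖⁻¹ • (z - w), ‖z - w‖, norm_smul_inv_norm hu, ?_, ?_⟩
    · rw [real_inner_smul_right, hwu, mul_zero]
    · rw [smul_inv_smul₀ (norm_ne_zero_iff.mpr hu), add_sub_cancel]

theorem exists_norm_sub_inner_smul_eq [FiniteDimensional ℝ E]
    (hE : 2 ≤ Module.finrank ℝ E) {w z : E} (hw : ‖w‖ = 1) (hwz : ⟪w, z⟫ = 1) :
    ∃ x : E, x ≠ 0 ∧ ‖x - ⟪w, x⟫ • z‖ = ‖z‖ * ‖x‖ := by
  obtain ⟨y, c, hy, hwy, rfl⟩ := exists_eq_add_smul_of_inner_eq_one hE hw hwz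
  have hwx : ⟪w, y - c • w⟫ = -c := by
    rw [inner_sub_right, real_inner_smul_right, hwy, real_inner_self_eq_norm_sq, hw]; ring
  have hz : ‖w + c • y‖ = √(1 + c * c) := by
    rw [norm_add_eq_sqrt_iff_real_inner_eq_zero.mpr (by rw [real_inner_smul_right, hwy, mul_zero]),
      norm_smul, hw, hy, Real.norm_eq_abs, mul_one, mul_one, abs_mul_abs_self]
  have hx : ‖y - c • w‖ = √(1 + c * c) := by
    rw [norm_sub_eq_sqrt_iff_real_inner_eq_zero.mpr
      (by rw [real_inner_smul_right, real_inner_comm, hwy, mul_zero]), norm_smul, hw, hy,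
      Real.norm_eq_abs, mul_one, mul_one, abs_mul_abs_self]
  have hPx : y - c • w - ⟪w, y - c • w⟫ • (w + c • y) = (1 + c * c) • y := by
    rw [hwx]; module
  have hc : 0 < 1 + c * c := add_pos_of_pos_of_nonneg one_pos (mul_self_nonneg c)
  refine ⟨y - c • w, ?_, ?_⟩
  · rw [← norm_ne_zero_iff, hx]; exact (Real.sqrt_pos.mpr hc).ne'
  · rw [hPx, hz, hx, Real.mul_self_sqrt hc.le, norm_smul, hy, mul_one, Real.norm_of_nonneg hc.le]

theorem ContinuousLinearMap.opNorm_eq_of_apply_eq_sub_inner_smul [FiniteDimensional ℝ E]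
    (hE : 2 ≤ Module.finrank ℝ E) {w z : E} (hw : ‖w‖ = 1) (hwz : ⟪w, z⟫ = 1) (P : E →L[ℝ] E)
    (hP : ∀ x, P x = x - ⟪w, x⟫ • z) : ‖P‖ = ‖z‖ := by
  refine le_antisymm (P.opNorm_le_bound (norm_nonneg z) fun x => ?_) ?_
  · rw [hP]; exact norm_sub_inner_smul_le hw hwz x
  · obtain ⟨x, hx, hPx⟩ := exists_norm_sub_inner_smul_eq hE hw hwz
    rw [← hP] at hPx
    exact le_of_mul_le_mul_right (hPx ▸ P.le_opNorm x) (norm_pos_iff.mpr hx)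

end ObliqueProjection

theorem norm_projection_along_vector_general
    {H : Type*} [NormedAddCommGroup H] [InnerProductSpace ℝ H] [FiniteDimensional ℝ H]
    (hdim : 2 ≤ Module.finrank ℝ H)
    (f : H →ₗ[ℝ] ℝ) (v : H) (hfv : f v = 1)
    (P : H →L[ℝ] H) (hP : ∀ x, P x = x - f x • v)
    (w : H) (hw : ‖w‖ = 1) (hwK : w ∈ (LinearMap.ker f)ᗮ)
    (θ : ℝ)
    (hcos : Real.cos θ = |(inner ℝ ((‖v‖⁻¹ : ℝ) • v) w : ℝ)|) :
    ‖P‖ = 1 / Real.cos θ := by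
  have hinner := inner_eq_apply_mul_inner_of_mem_orthogonal_ker hfv hwK
  have ha : ⟪w, v⟫ ≠ 0 := fun h => by
    simpa [h, real_inner_self_eq_norm_sq, hw] using hinner w
  have hwz : ⟪w, ⟪w, v⟫⁻¹ • v⟫ = 1 := by rw [real_inner_smul_right, inv_mul_cancel₀ ha]
  have hPz : ∀ x, P x = x - ⟪w, x⟫ • (⟪w, v⟫⁻¹ • v) := fun x => by
    rw [hP, hinner, smul_smul, mul_inv_cancel_right₀ ha]
  rw [P.opNorm_eq_of_apply_eq_sub_inner_smul hdim hw hwz hPz, hcos, norm_smul,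
    real_inner_smul_left, real_inner_comm, abs_mul, abs_inv, abs_norm, Real.norm_eq_abs, abs_inv,
    one_div, mul_inv, inv_inv, mul_comm]

/-- The norm of the projection onto the hyperplane `K = ker f` along a vector `v` with
`f v = 1` equals `1 / cos θ`, where `θ` is the angle between `v` and `K^⊥`. -/
theorem norm_projection_along_vector
    {H : Type*} [NormedAddCommGroup H] [InnerProductSpace ℝ H] [FiniteDimensional ℝ H]
    (hdim : 2 ≤ Module.finrank ℝ H)
    (f : H →ₗ[ℝ] ℝ) (hf : f ≠ 0) (v : H) (hfv : f v = 1)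
    (P : H →L[ℝ] H) (hP : ∀ x, P x = x - f x • v)
    (w : H) (hw : ‖w‖ = 1) (hwK : w ∈ (LinearMap.ker f)ᗮ)
    (θ : ℝ) (hθ : θ ∈ Set.Ico 0 (Real.pi / 2))
    (hcos : Real.cos θ = |(inner ℝ ((‖v‖⁻¹ : ℝ) • v) w : ℝ)|) :
    ‖P‖ = 1 / Real.cos θ :=
  norm_projection_along_vector_general hdim f v hfv P hP w hw hwK θ hcos
end

section
/- Let (X, μ) be a probability space, let (φ^t)_{t∈ℝ} be a measurable measure-preserving flow on X, and let Q : X → (0, 1] be measurable. Suppose there exist ρ > 0 and c > 0 such that e^{−c} ≤ Q(φ^t x)/Q(x) ≤ e^{c} for every x ∈ X and every t ∈ [0, ρ]. Then for every ε > 0, for μ-almost every x ∈ X: inf { e^{ε|t|} Q(φ^t x) : t ∈ ℝ } > 0. -/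
/-!
Put `g = log Q`, so that `|g ∘ φ^r - g| ≤ c` for `0 ≤ r ≤ ρ`. Since each window between
consecutive multiples of `ρ` costs at most `c`, it suffices to bound `g (T^[n] x) + n δ` from below,
for `T = φ^{±ρ}` and `δ = ερ`. On the `T`-invariant set `B` where this fails, the Birkhoff sums
`g - g ∘ T^[n] - n δ` of `u = g - g ∘ T - δ` are positive for some `n`, so the maximal ergodic
theorem applied to `μ|B` gives `0 ≤ ∫_B u = -δ μ(B)`. Here the coboundary `g ∘ T - g` integrates to
zero although `g` need not be integrable, by truncating `g` at levels `±M`.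
-/

open MeasureTheory Filter Set Topology

section MaximalErgodic

variable {X : Type*} {T : X → X} {u : X → ℝ}

noncomputable def birkhoffMax (T : X → X) (u : X → ℝ) (N : ℕ) (x : X) : ℝ :=
  (Finset.range (N + 1)).sup' Finset.nonempty_range_add_one fun n => birkhoffSum T u n x

lemma birkhoffSum_le_birkhoffMax {n N : ℕ} (hn : n ≤ N) (x : X) :
    birkhoffSum T u n x ≤ birkhoffMax T u N x :=
  Finset.le_sup' (fun n => birkhoffSum T u n x) (Finset.mem_range_succ_iff.2 hn)

lemma exists_birkhoffSum_eq_birkhoffMax (N : ℕ) (x : X) :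
    ∃ n ≤ N, birkhoffSum T u n x = birkhoffMax T u N x := by
  obtain ⟨n, hn, h⟩ := Finset.exists_mem_eq_sup' Finset.nonempty_range_add_one
    fun n => birkhoffSum T u n x
  exact ⟨n, Finset.mem_range_succ_iff.1 hn, h.symm⟩

lemma birkhoffMax_nonneg (N : ℕ) (x : X) : 0 ≤ birkhoffMax T u N x := by
  simpa using birkhoffSum_le_birkhoffMax (T := T) (u := u) (Nat.zero_le N) x

lemma birkhoffMax_mono (x : X) : Monotone fun N => birkhoffMax T u N x := fun _ _ h =>
  Finset.sup'_mono _ (Finset.range_subset_range.2 (Nat.succ_le_succ h)) _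

lemma birkhoffMax_le_add_birkhoffMax_apply {N : ℕ} {x : X} (hx : 0 < birkhoffMax T u N x) :
    birkhoffMax T u N x ≤ u x + birkhoffMax T u N (T x) := by
  obtain ⟨n, hn, hmax⟩ := exists_birkhoffSum_eq_birkhoffMax (T := T) (u := u) N x
  cases n with
  | zero => simp [← hmax] at hx
  | succ _ =>
    rw [← hmax, birkhoffSum_succ']
    gcongr
    exact birkhoffSum_le_birkhoffMax (by omega) _

lemma abs_birkhoffMax_le (N : ℕ) (x : X) :
    |birkhoffMax T u N x| ≤ ∑ k ∈ Finset.range N, |u (T^[k] x)| := by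
  obtain ⟨n, hn, hmax⟩ := exists_birkhoffSum_eq_birkhoffMax (T := T) (u := u) N x
  rw [← hmax]
  calc |birkhoffSum T u n x| ≤ ∑ k ∈ Finset.range n, |u (T^[k] x)| :=
        Finset.abs_sum_le_sum_abs _ _
    _ ≤ ∑ k ∈ Finset.range N, |u (T^[k] x)| :=
        Finset.sum_le_sum_of_subset_of_nonneg (Finset.range_subset_range.2 hn)
          fun _ _ _ => abs_nonneg _

variable [MeasurableSpace X] {μ : Measure X}

lemma measurable_birkhoffMax (hT : Measurable T) (hu : Measurable u) (N : ℕ) :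
    Measurable (birkhoffMax T u N) :=
  Finset.measurable_range_sup'' fun _ _ =>
    Finset.measurable_sum _ fun k _ => hu.comp (hT.iterate k)

lemma MeasureTheory.MeasurePreserving.integrable_birkhoffMax (hT : MeasurePreserving T μ μ)
    (hu_meas : Measurable u) (hu : Integrable u μ) (N : ℕ) :
    Integrable (birkhoffMax T u N) μ :=
  (integrable_finsetSum _ fun k _ => ((hT.iterate k).integrable_comp_of_integrable hu).abs).mono'
    (measurable_birkhoffMax hT.measurable hu_meas N).aestronglyMeasurable
    (ae_of_all _ fun x => by simpa using abs_birkhoffMax_le N x)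

lemma MeasureTheory.MeasurePreserving.setIntegral_birkhoffMax_pos_nonneg
    (hT : MeasurePreserving T μ μ) (hu_meas : Measurable u) (hu : Integrable u μ) (N : ℕ) :
    0 ≤ ∫ x in {x | 0 < birkhoffMax T u N x}, u x ∂μ := by
  set M := birkhoffMax T u N
  have hM_meas : Measurable M := measurable_birkhoffMax hT.measurable hu_meas N
  have hM : Integrable M μ := hT.integrable_birkhoffMax hu_meas hu N
  have hMT : Integrable (M ∘ T) μ := hT.integrable_comp_of_integrable hM
  have hA : MeasurableSet {x | 0 < M x} := measurableSet_lt measurable_const hM_meas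
  have hM_comp : ∫ x, M (T x) ∂μ = ∫ x, M x ∂μ := by
    rw [← integral_map hT.measurable.aemeasurable hM_meas.aestronglyMeasurable, hT.map_eq]
  calc (0 : ℝ) = ∫ x, M x ∂μ - ∫ x, M (T x) ∂μ := by rw [hM_comp, sub_self]
    _ ≤ ∫ x in {x | 0 < M x}, M x ∂μ - ∫ x in {x | 0 < M x}, M (T x) ∂μ := by
      refine sub_le_sub (setIntegral_eq_integral_of_forall_compl_eq_zero fun x hx =>
        le_antisymm (not_lt.1 hx) (birkhoffMax_nonneg N x)).ge ?_
      exact setIntegral_le_integral hMT (ae_of_all _ fun x => birkhoffMax_nonneg N (T x))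
    _ = ∫ x in {x | 0 < M x}, (M x - M (T x)) ∂μ :=
      (integral_sub hM.integrableOn hMT.integrableOn).symm
    _ ≤ ∫ x in {x | 0 < M x}, u x ∂μ :=
      setIntegral_mono_on (hM.sub hMT).integrableOn hu.integrableOn hA fun x hx => by
        linarith [birkhoffMax_le_add_birkhoffMax_apply (T := T) (u := u) hx]

theorem MeasureTheory.MeasurePreserving.setIntegral_exists_birkhoffSum_pos_nonneg
    (hT : MeasurePreserving T μ μ) (hu_meas : Measurable u) (hu : Integrable u μ) :
    0 ≤ ∫ x in {x | ∃ n, 0 < birkhoffSum T u n x}, u x ∂μ := by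
  have hunion : ⋃ N, {x | 0 < birkhoffMax T u N x} = {x | ∃ n, 0 < birkhoffSum T u n x} := by
    ext x
    simp only [mem_iUnion]
    constructor
    · rintro ⟨N, hN⟩
      obtain ⟨n, -, hn⟩ := exists_birkhoffSum_eq_birkhoffMax (T := T) (u := u) N x
      exact ⟨n, hn ▸ hN⟩
    · rintro ⟨n, hn⟩
      exact ⟨n, hn.trans_le (birkhoffSum_le_birkhoffMax le_rfl x)⟩
  rw [← hunion]
  refine ge_of_tendsto' (tendsto_setIntegral_of_monotone
    (fun N => measurableSet_lt measurable_const (measurable_birkhoffMax hT.measurable hu_meas N))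
    (fun N N' h x hx => lt_of_lt_of_le hx (birkhoffMax_mono x h)) hu.integrableOn)
    fun N => hT.setIntegral_birkhoffMax_pos_nonneg hu_meas hu N

end MaximalErgodic

lemma bddBelow_range_iterate_add_mul_apply_iff {X : Type*} (T : X → X) (g : X → ℝ) (δ : ℝ)
    (x : X) :
    BddBelow (range fun n : ℕ => g (T^[n] (T x)) + n * δ) ↔
      BddBelow (range fun n : ℕ => g (T^[n] x) + n * δ) := by
  have hsucc (n : ℕ) : g (T^[n + 1] x) + (n + 1 : ℕ) * δ = g (T^[n] (T x)) + n * δ + δ := by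
    rw [Function.iterate_succ_apply]; push_cast; ring
  constructor
  · rintro ⟨b, hb⟩
    refine ⟨min (g x) (b + δ), forall_mem_range.2 fun n => ?_⟩
    cases n with
    | zero => simp
    | succ n => rw [hsucc]; linarith [min_le_right (g x) (b + δ), hb (mem_range_self n)]
  · rintro ⟨b, hb⟩
    exact ⟨b - δ, forall_mem_range.2 fun n => by linarith [hsucc n, hb (mem_range_self (n + 1))]⟩

section Coboundary

variable {X : Type*} [MeasurableSpace X] {μ : Measure X} [IsFiniteMeasure μ] {T : X → X}
  {g : X → ℝ}

theorem MeasureTheory.MeasurePreserving.integral_comp_sub_eq_zero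
    (hT : MeasurePreserving T μ μ) (hg : Measurable g)
    (hint : Integrable (fun x => g (T x) - g x) μ) :
    ∫ x, (g (T x) - g x) ∂μ = 0 := by
  let G : ℕ → X → ℝ := fun M x => projIcc (-(M : ℝ)) M (by simp) (g x)
  have hG_meas (M : ℕ) : Measurable (G M) :=
    measurable_subtype_coe.comp (continuous_projIcc.measurable.comp hg)
  have hG_int (M : ℕ) : Integrable (G M) μ :=
    Integrable.of_bound (hG_meas M).aestronglyMeasurable M
      (ae_of_all _ fun x => abs_le.2 (projIcc (-(M : ℝ)) M (by simp) (g x)).2)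
  have hG_comp (M : ℕ) : ∫ x, (G M (T x) - G M x) ∂μ = 0 := by
    rw [integral_sub (f := fun x => G M (T x)) (hT.integrable_comp_of_integrable (hG_int M))
      (hG_int M), ← integral_map hT.measurable.aemeasurable (hG_meas M).aestronglyMeasurable,
      hT.map_eq,
      sub_self]
  have hlim : Tendsto (fun M : ℕ => ∫ x, (G M (T x) - G M x) ∂μ) atTop
      (𝓝 (∫ x, (g (T x) - g x) ∂μ)) := by
    refine tendsto_integral_of_dominated_convergence (fun x => |g (T x) - g x|)
      (fun M => (((hG_meas M).comp hT.measurable).sub (hG_meas M)).aestronglyMeasurable)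
      hint.abs (fun M => ae_of_all _ fun x => ?_) (ae_of_all _ fun x => ?_)
    · simpa using abs_projIcc_sub_projIcc _
    · obtain ⟨N, hN⟩ := exists_nat_ge (max |g x| |g (T x)|)
      refine tendsto_const_nhds.congr' (eventually_atTop.2 ⟨N, fun M hM => ?_⟩)
      have hM : max |g x| |g (T x)| ≤ M := hN.trans (Nat.cast_le.2 hM)
      simp only [G, projIcc_of_mem _ (abs_le.1 ((le_max_left _ _).trans hM)),
        projIcc_of_mem _ (abs_le.1 ((le_max_right _ _).trans hM))]
  exact tendsto_nhds_unique hlim (by simp only [hG_comp, tendsto_const_nhds])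

theorem MeasureTheory.MeasurePreserving.ae_bddBelow_range_iterate_add_mul
    (hT : MeasurePreserving T μ μ) (hg : Measurable g)
    (hint : Integrable (fun x => g (T x) - g x) μ) {δ : ℝ} (hδ : 0 < δ) :
    ∀ᵐ x ∂μ, BddBelow (range fun n : ℕ => g (T^[n] x) + n * δ) := by
  set B := {x | ¬ BddBelow (range fun n : ℕ => g (T^[n] x) + n * δ)}
  have hB : MeasurableSet B := (measurableSet_bddBelow_range fun n =>
    (hg.comp (hT.measurable.iterate n)).add measurable_const).compl
  have hTB : MeasurePreserving T (μ.restrict B) (μ.restrict B) := by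
    have hB_inv : T ⁻¹' B = B := by
      ext x
      exact not_congr (bddBelow_range_iterate_add_mul_apply_iff T g δ x)
    simpa only [hB_inv] using hT.restrict_preimage hB
  set u : X → ℝ := fun x => -(g (T x) - g x) - δ
  have hu_meas : Measurable u := ((hg.comp hT.measurable).sub hg).neg.sub measurable_const
  have hu : Integrable u (μ.restrict B) := hint.restrict.neg.sub (integrable_const δ)
  have hsum (n : ℕ) (x : X) : birkhoffSum T u n x = g x - (g (T^[n] x) + n * δ) := by
    induction n with
    | zero => simp
    | succ n ih =>
      rw [birkhoffSum_succ, ih, Function.iterate_succ_apply']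
      push_cast
      ring
  have hpos : ∀ᵐ x ∂μ.restrict B, x ∈ {x | ∃ n, 0 < birkhoffSum T u n x} := by
    refine ae_restrict_of_forall_mem hB fun x hx => ?_
    obtain ⟨_, ⟨n, rfl⟩, hn⟩ := not_bddBelow_iff.1 hx (g x)
    exact ⟨n, by rw [hsum]; linarith⟩
  have hmax := hTB.setIntegral_exists_birkhoffSum_pos_nonneg hu_meas hu
  rw [Measure.restrict_eq_self_of_ae_mem hpos] at hmax
  rw [integral_sub (f := fun x => -(g (T x) - g x)) hint.restrict.neg (integrable_const δ),
    integral_neg, hTB.integral_comp_sub_eq_zero hg hint.restrict, integral_const, smul_eq_mul,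
    measureReal_restrict_apply_univ] at hmax
  have hB_null : μ.real B = 0 := le_antisymm (by nlinarith [measureReal_nonneg (μ := μ) (s := B)])
    measureReal_nonneg
  exact ae_iff.2 ((measureReal_eq_zero_iff).1 hB_null)

end Coboundary

section Flow

variable {X : Type*} [MeasurableSpace X] {μ : Measure X} [IsFiniteMeasure μ]

theorem ae_bddBelow_image_Ici_flow_add_mul {φ : ℝ → X → X}
    (hadd : ∀ s t x, φ (s + t) x = φ s (φ t x)) {g : X → ℝ} (hg : Measurable g) {ρ c ε : ℝ}
    (hρ : 0 < ρ) (hε : 0 < ε) (hT : MeasurePreserving (φ ρ) μ μ)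
    (hstep : ∀ x, ∀ r ∈ Icc 0 ρ, |g (φ r x) - g x| ≤ c) :
    ∀ᵐ x ∂μ, BddBelow ((fun t => g (φ t x) + ε * t) '' Ici 0) := by
  have hiter (n : ℕ) (r : ℝ) (x : X) : φ (r + n * ρ) x = φ r ((φ ρ)^[n] x) := by
    induction n generalizing r with
    | zero => simp
    | succ n ih =>
      rw [Function.iterate_succ_apply', ← hadd, ← ih]
      push_cast
      ring_nf
  have hint : Integrable (fun x => g (φ ρ x) - g x) μ :=
    Integrable.of_bound ((hg.comp hT.measurable).sub hg).aestronglyMeasurable c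
      (ae_of_all _ fun x => hstep x ρ ⟨hρ.le, le_rfl⟩)
  filter_upwards [hT.ae_bddBelow_range_iterate_add_mul hg hint (mul_pos hε hρ)] with x ⟨b, hb⟩
  refine ⟨b - c, ?_⟩
  rintro _ ⟨t, ht, rfl⟩
  set n := ⌊t / ρ⌋₊
  have hnt : n * ρ ≤ t := (le_div_iff₀ hρ).1 (Nat.floor_le (div_nonneg ht hρ.le))
  have htn : t < n * ρ + ρ := by
    have := (div_lt_iff₀ hρ).1 (Nat.lt_floor_add_one (t / ρ))
    linarith
  have hwindow := hstep ((φ ρ)^[n] x) (t - n * ρ) ⟨by linarith, by linarith⟩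
  rw [← hiter, sub_add_cancel] at hwindow
  have horbit : b ≤ g ((φ ρ)^[n] x) + n * (ε * ρ) := hb (mem_range_self n)
  have hεt : n * (ε * ρ) ≤ ε * t := by nlinarith
  linarith [abs_le.1 hwindow]

end Flow

lemma abs_log_sub_log_le_of_div_mem {a b c : ℝ} (ha : 0 < a) (hb : 0 < b)
    (h : a / b ∈ Icc (Real.exp (-c)) (Real.exp c)) : |Real.log a - Real.log b| ≤ c := by
  have hab := div_pos ha hb
  rw [← Real.log_div ha.ne' hb.ne', abs_le]
  exact ⟨(Real.le_log_iff_exp_le hab).2 h.1, (Real.log_le_iff_le_exp hab).2 h.2⟩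

theorem inf_positive_ae_general {X : Type*} [MeasurableSpace X] (μ : Measure X)
    [IsProbabilityMeasure μ]
    (φ : ℝ → X → X)
    (h0 : ∀ x, φ 0 x = x)
    (hadd : ∀ s t x, φ (s + t) x = φ s (φ t x))
    (hpres : ∀ t, MeasurePreserving (φ t) μ μ)
    (Q : X → ℝ) (hQmeas : Measurable Q) (hQ : ∀ x, Q x ∈ Set.Ioc (0 : ℝ) 1)
    (ρ c : ℝ) (hρ : 0 < ρ)
    (hratio : ∀ x, ∀ t ∈ Set.Icc (0 : ℝ) ρ,
      Real.exp (-c) ≤ Q (φ t x) / Q x ∧ Q (φ t x) / Q x ≤ Real.exp c)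
    (ε : ℝ) (hε : 0 < ε) :
    ∀ᵐ x ∂μ, 0 < sInf {y : ℝ | ∃ t : ℝ, y = Real.exp (ε * |t|) * Q (φ t x)} := by
  set g : X → ℝ := fun x => Real.log (Q x)
  have hstep : ∀ x, ∀ r ∈ Icc 0 ρ, |g (φ r x) - g x| ≤ c := fun x r hr =>
    abs_log_sub_log_le_of_div_mem (hQ _).1 (hQ x).1 (hratio x r hr)
  have hstep_rev : ∀ x, ∀ r ∈ Icc 0 ρ, |g (φ (-r) x) - g x| ≤ c := fun x r hr => by
    have hx : φ r (φ (-r) x) = x := by rw [← hadd, add_neg_cancel, h0]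
    simpa only [abs_sub_comm, hx] using hstep (φ (-r) x) r hr
  have hfwd := ae_bddBelow_image_Ici_flow_add_mul hadd hQmeas.log hρ hε (hpres ρ) hstep
  have hbwd := ae_bddBelow_image_Ici_flow_add_mul (φ := fun s => φ (-s))
    (fun s t x => by simp only [neg_add, hadd]) hQmeas.log hρ hε (hpres (-ρ)) hstep_rev
  filter_upwards [hfwd, hbwd] with x ⟨b₁, hb₁⟩ ⟨b₂, hb₂⟩
  have hbound (t : ℝ) : min b₁ b₂ ≤ g (φ t x) + ε * |t| := by
    rcases le_total 0 t with ht | ht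
    · rw [abs_of_nonneg ht]
      exact (min_le_left _ _).trans (hb₁ ⟨t, ht, rfl⟩)
    · rw [abs_of_nonpos ht]
      simpa using (min_le_right _ _).trans (hb₂ ⟨-t, neg_nonneg.2 ht, rfl⟩)
  refine (Real.exp_pos (min b₁ b₂)).trans_le (le_csInf ⟨_, 0, rfl⟩ ?_)
  rintro _ ⟨t, rfl⟩
  calc Real.exp (min b₁ b₂) ≤ Real.exp (ε * |t| + g (φ t x)) :=
        Real.exp_le_exp.2 (by linarith [hbound t])
    _ = Real.exp (ε * |t|) * Q (φ t x) := by rw [Real.exp_add, Real.exp_log (hQ _).1]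

/-- For a measurable measure-preserving flow and a measurable `Q : X → (0,1]` with
a uniform ratio bound on time intervals of length `ρ`, for every `ε > 0` one has
`inf { e^{ε|t|} Q(φ^t x) : t ∈ ℝ } > 0` for μ-a.e. `x`. -/
theorem inf_positive_ae {X : Type*} [MeasurableSpace X] (μ : Measure X)
    [IsProbabilityMeasure μ]
    (φ : ℝ → X → X) (hφmeas : Measurable (Function.uncurry φ))
    (h0 : ∀ x, φ 0 x = x)
    (hadd : ∀ s t x, φ (s + t) x = φ s (φ t x))
    (hpres : ∀ t, MeasurePreserving (φ t) μ μ)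
    (Q : X → ℝ) (hQmeas : Measurable Q) (hQ : ∀ x, Q x ∈ Set.Ioc (0 : ℝ) 1)
    (ρ c : ℝ) (hρ : 0 < ρ) (hc : 0 < c)
    (hratio : ∀ x, ∀ t ∈ Set.Icc (0 : ℝ) ρ,
      Real.exp (-c) ≤ Q (φ t x) / Q x ∧ Q (φ t x) / Q x ≤ Real.exp c)
    (ε : ℝ) (hε : 0 < ε) :
    ∀ᵐ x ∂μ, 0 < sInf {y : ℝ | ∃ t : ℝ, y = Real.exp (ε * |t|) * Q (φ t x)} :=
  inf_positive_ae_general μ φ h0 hadd hpres Q hQmeas hQ ρ c hρ hratio ε hε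
end

section
/- Let ε > 0, c > 0, Q : ℝ → (0,∞), and let (t_n)_{n∈ℤ} be strictly increasing with t_n → ±∞ as n → ±∞. Assume that e^{−c} ≤ Q(t)/Q(t_n) ≤ e^{c} whenever t ∈ [t_n, t_{n+1}]. Define p(n) := ε · inf { e^{ε(t_m − t_n)} Q(t_m) : m ≥ n } and q(t) := ε · inf { e^{ε(s − t)} Q(s) : s ≥ t }. Then for every n ∈ ℤ: q(t_n) ≤ p(n) ≤ e^{c} · q(t_n). -/
/-! A tail infimum over the grid `t_m, m ≥ n`, is an infimum over fewer points than the one over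
`s ≥ t_n`, hence larger. Conversely every `s ≥ t_n` lies in some `[t_m, t_{m+1})` with `m ≥ n`;
there `t_m ≤ s` makes the exponential weight smaller and `Q(t_m) ≤ e^c Q(s)`, so each point of
the continuous infimum is dominated, up to `e^c`, by a point of the discrete one. -/

open Filter

theorem exists_mem_Ico_of_tendsto_atTop {α : Type*} [LinearOrder α] [NoMaxOrder α]
    {t : ℤ → α} (htop : Tendsto t atTop atTop) {n : ℤ} {s : α} (hs : t n ≤ s) :
    ∃ m, n ≤ m ∧ s ∈ Set.Ico (t m) (t (m + 1)) := by
  obtain ⟨N, hN⟩ := (htop.eventually_gt_atTop s).exists_forall_of_atTop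
  have hbdd : ∀ z, t z ≤ s → z ≤ N := fun z hz => by
    by_contra! hNz
    exact (hN z hNz.le).not_ge hz
  obtain ⟨m, hm, hmax⟩ := Int.exists_greatest_of_bdd ⟨N, hbdd⟩ ⟨n, hs⟩
  refine ⟨m, hmax n hs, hm, lt_of_not_ge fun h => ?_⟩
  exact (lt_add_one m).not_ge (hmax (m + 1) h)

theorem csInf_le_mul_csInf {A B : Set ℝ} (hA : BddBelow A) (hB : B.Nonempty) {k : ℝ}
    (hk : 0 ≤ k) (h : ∀ b ∈ B, ∃ a ∈ A, a ≤ k * b) : sInf A ≤ k * sInf B := by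
  rw [← smul_eq_mul, ← Real.sInf_smul_of_nonneg hk]
  refine le_csInf hB.smul_set ?_
  rintro _ ⟨b, hb, rfl⟩
  obtain ⟨a, ha, hab⟩ := h b hb
  exact (csInf_le hA ha).trans hab

theorem exists_grid_point_le_exp_mul {ε c : ℝ} (hε : 0 ≤ ε) {Q : ℝ → ℝ} (hQ : ∀ t, 0 < Q t)
    {t : ℤ → ℝ} (htop : Tendsto t atTop atTop)
    (hratio : ∀ n : ℤ, ∀ s ∈ Set.Icc (t n) (t (n + 1)), Real.exp (-c) ≤ Q s / Q (t n))
    {n : ℤ} {s : ℝ} (hs : t n ≤ s) :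
    ∃ m, n ≤ m ∧ Real.exp (ε * (t m - t n)) * Q (t m) ≤
      Real.exp c * (Real.exp (ε * (s - t n)) * Q s) := by
  obtain ⟨m, hnm, hsm⟩ := exists_mem_Ico_of_tendsto_atTop htop hs
  have hQm : Q (t m) ≤ Real.exp c * Q s := by
    have := hratio m s (Set.Ico_subset_Icc_self hsm)
    rwa [le_div_iff₀ (hQ _), Real.exp_neg, inv_mul_le_iff₀ (Real.exp_pos c)] at this
  have hexp : Real.exp (ε * (t m - t n)) ≤ Real.exp (ε * (s - t n)) := by
    gcongr
    exact hsm.1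
  refine ⟨m, hnm, ?_⟩
  calc Real.exp (ε * (t m - t n)) * Q (t m)
      ≤ Real.exp (ε * (s - t n)) * (Real.exp c * Q s) :=
        mul_le_mul hexp hQm (hQ _).le (Real.exp_pos _).le
    _ = Real.exp c * (Real.exp (ε * (s - t n)) * Q s) := by ring

theorem discrete_vs_continuous_parameter_general (ε c : ℝ) (hε : 0 < ε)
    (Q : ℝ → ℝ) (hQ : ∀ t, 0 < Q t)
    (t : ℤ → ℝ) (ht : StrictMono t)
    (htop : Tendsto t atTop atTop)
    (hratio : ∀ n : ℤ, ∀ s ∈ Set.Icc (t n) (t (n + 1)),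
      Real.exp (-c) ≤ Q s / Q (t n) ∧ Q s / Q (t n) ≤ Real.exp c)
    (p : ℤ → ℝ)
    (hp : ∀ n : ℤ, p n = ε * sInf {y : ℝ | ∃ m : ℤ, n ≤ m ∧
      y = Real.exp (ε * (t m - t n)) * Q (t m)})
    (q : ℝ → ℝ)
    (hq : ∀ s : ℝ, q s = ε * sInf {y : ℝ | ∃ s' : ℝ, s ≤ s' ∧
      y = Real.exp (ε * (s' - s)) * Q s'}) :
    ∀ n : ℤ, q (t n) ≤ p n ∧ p n ≤ Real.exp c * q (t n) := by
  intro n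
  rw [hp, hq, mul_left_comm]
  set A := {y : ℝ | ∃ m : ℤ, n ≤ m ∧ y = Real.exp (ε * (t m - t n)) * Q (t m)}
  set B := {y : ℝ | ∃ s : ℝ, t n ≤ s ∧ y = Real.exp (ε * (s - t n)) * Q s}
  have hAB : A ⊆ B := by
    rintro _ ⟨m, hm, rfl⟩
    exact ⟨t m, ht.monotone hm, rfl⟩
  have hAne : A.Nonempty := ⟨_, n, le_rfl, rfl⟩
  have hBne : B.Nonempty := ⟨_, t n, le_rfl, rfl⟩
  have hBbdd : BddBelow B := ⟨0, by
    rintro _ ⟨s, -, rfl⟩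
    exact (mul_pos (Real.exp_pos _) (hQ s)).le⟩
  refine ⟨mul_le_mul_of_nonneg_left (csInf_le_csInf hBbdd hAne hAB) hε.le, ?_⟩
  gcongr
  refine csInf_le_mul_csInf (hBbdd.mono hAB) hBne (Real.exp_pos c).le ?_
  rintro _ ⟨s, hs, rfl⟩
  obtain ⟨m, hnm, hle⟩ := exists_grid_point_le_exp_mul hε.le hQ htop
    (fun m s hs => (hratio m s hs).1) hs
  exact ⟨_, ⟨m, hnm, rfl⟩, hle⟩

/-- Comparison between the ℤ-indexed parameter `p(n)` and its continuous version `q(t)`: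
`q(t_n) ≤ p(n) ≤ e^c q(t_n)`. -/
theorem discrete_vs_continuous_parameter (ε c : ℝ) (hε : 0 < ε) (hc : 0 < c)
    (Q : ℝ → ℝ) (hQ : ∀ t, 0 < Q t)
    (t : ℤ → ℝ) (ht : StrictMono t)
    (htop : Tendsto t atTop atTop) (hbot : Tendsto t atBot atBot)
    (hratio : ∀ n : ℤ, ∀ s ∈ Set.Icc (t n) (t (n + 1)),
      Real.exp (-c) ≤ Q s / Q (t n) ∧ Q s / Q (t n) ≤ Real.exp c)
    (p : ℤ → ℝ)
    (hp : ∀ n : ℤ, p n = ε * sInf {y : ℝ | ∃ m : ℤ, n ≤ m ∧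
      y = Real.exp (ε * (t m - t n)) * Q (t m)})
    (q : ℝ → ℝ)
    (hq : ∀ s : ℝ, q s = ε * sInf {y : ℝ | ∃ s' : ℝ, s ≤ s' ∧
      y = Real.exp (ε * (s' - s)) * Q s'}) :
    ∀ n : ℤ, q (t n) ≤ p n ∧ p n ≤ Real.exp c * q (t n) :=
  discrete_vs_continuous_parameter_general ε c hε Q hQ t ht htop hratio p hp q hq
end

section
/- In the setting of the splitting identity S(0)² = 4e^{4ρ}∫₀^t e^{2χτ}(F(τ)/F(0))² dτ + e^{2χt}(F(t)/F(0))² S(t)², assume additionally that 0 < ρ ≤ 1/100, 0 < χ < 1, that F(τ)/F(0) ≤ e^{2ρ+τ} for all τ ∈ [0, 2ρ], and that S(0) ≥ √2. Then for every t with 0 < t ≤ 2ρ: e^{−4ρ} < e^{χt}·(F(t)/F(0))·(S(t)/S(0)) < 1. -/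
open MeasureTheory

lemma pesin_aux_key (ρ a b : ℝ) (hρ0 : 0 < ρ) (hρ : ρ ≤ 1 / 100)
    (ha : 0 < a) (hb : 0 < b)
    (h8 : a * (1 + 8*ρ) ≤ 1) (h16 : (1 - 16*ρ) * b ≤ 1) :
    a < 1 - 4*ρ*b := by
  have hpos : (0:ℝ) < (1 + 8*ρ) * (1 - 16*ρ) := by nlinarith
  nlinarith [mul_le_mul_of_nonneg_right h8 (show (0:ℝ) ≤ 1 - 16*ρ by linarith),
    mul_le_mul_of_nonneg_left h16 (show (0:ℝ) ≤ 4*ρ*(1+8*ρ) by positivity),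
    mul_pos ha hb, hpos, mul_pos hρ0 hρ0]

/-- Under the splitting identity for `S(t)`, with `ρ ≤ 1/100`, `0 < χ < 1`,
`F(τ)/F(0) ≤ e^{2ρ+τ}` on `[0,2ρ]` and `S(0) ≥ √2`, one has
`e^{-4ρ} < e^{χt} (F(t)/F(0)) (S(t)/S(0)) < 1` for `0 < t ≤ 2ρ`. -/
theorem pesin_parameter_ratio_bounds (χ ρ : ℝ)
    (hρ0 : 0 < ρ) (hρ : ρ ≤ 1 / 100) (hχ0 : 0 < χ) (hχ1 : χ < 1)
    (F : ℝ → ℝ) (hFmeas : Measurable F) (hFpos : ∀ t ≥ (0 : ℝ), 0 < F t)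
    (hint : IntegrableOn (fun τ => Real.exp (2 * χ * τ) * F τ ^ 2) (Set.Ioi 0))
    (S : ℝ → ℝ)
    (hS : ∀ t ≥ (0 : ℝ), S t = 2 * Real.exp (2 * ρ) *
      Real.sqrt (∫ τ in Set.Ioi (0 : ℝ), Real.exp (2 * χ * τ) * (F (t + τ) / F t) ^ 2))
    (hId : ∀ t ≥ (0 : ℝ),
      S 0 ^ 2 = 4 * Real.exp (4 * ρ) *
          (∫ τ in (0 : ℝ)..t, Real.exp (2 * χ * τ) * (F τ / F 0) ^ 2) +
        Real.exp (2 * χ * t) * (F t / F 0) ^ 2 * S t ^ 2)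
    (hFbound : ∀ τ ∈ Set.Icc (0 : ℝ) (2 * ρ), F τ / F 0 ≤ Real.exp (2 * ρ + τ))
    (hS0 : Real.sqrt 2 ≤ S 0) :
    ∀ t, 0 < t → t ≤ 2 * ρ →
      Real.exp (-4 * ρ) < Real.exp (χ * t) * (F t / F 0) * (S t / S 0) ∧
      Real.exp (χ * t) * (F t / F 0) * (S t / S 0) < 1 := by
  intro t ht0 ht2
  have hF0 : 0 < F 0 := hFpos 0 le_rfl
  have hFt : 0 < F t := hFpos t ht0.le
  have hS0pos : 0 < S 0 := lt_of_lt_of_le (Real.sqrt_pos.mpr (by norm_num)) hS0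
  have hS0sq : (2:ℝ) ≤ S 0 ^ 2 := by
    nlinarith [Real.sq_sqrt (show (0:ℝ) ≤ 2 by norm_num), Real.sqrt_nonneg 2]
  have hStnonneg : 0 ≤ S t := by
    rw [hS t ht0.le]; positivity
  -- integrability of the interval integrand
  have h1 : IntegrableOn (fun τ => Real.exp (2*χ*τ) * (F τ / F 0)^2) (Set.Ioc 0 t) := by
    have h2 : IntegrableOn (fun τ => (Real.exp (2*χ*τ) * F τ ^ 2) * ((F 0)^2)⁻¹)
        (Set.Ioc 0 t) :=
      (hint.mono_set Set.Ioc_subset_Ioi_self).mul_const _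
    refine h2.congr_fun ?_ measurableSet_Ioc
    intro x _
    simp only [div_pow]
    rw [div_eq_mul_inv]; ring
  have hI : IntervalIntegrable (fun τ => Real.exp (2*χ*τ) * (F τ / F 0)^2) volume 0 t := by
    rw [intervalIntegrable_iff_integrableOn_Ioc_of_le ht0.le]; exact h1
  set I := ∫ τ in (0:ℝ)..t, Real.exp (2*χ*τ) * (F τ / F 0)^2 with hIdef
  have hIpos : 0 < I := by
    refine intervalIntegral.intervalIntegral_pos_of_pos_on hI ?_ ht0
    intro x hx
    have := hFpos x hx.1.le
    positivity
  have hIle : I ≤ t * Real.exp (12*ρ) := by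
    have hle : ∀ x ∈ Set.Icc (0:ℝ) t,
        Real.exp (2*χ*x) * (F x / F 0)^2 ≤ Real.exp (12*ρ) := by
      intro x hx
      have hx0 : 0 ≤ x := hx.1
      have hx2 : x ≤ 2*ρ := hx.2.trans ht2
      have hb := hFbound x ⟨hx0, hx2⟩
      have hFx := hFpos x hx0
      have h2 : (F x / F 0)^2 ≤ Real.exp (2*ρ+x)^2 :=
        pow_le_pow_left₀ (by positivity) hb 2
      have h3 : Real.exp (2*χ*x) ≤ Real.exp (2*x) :=
        Real.exp_le_exp.mpr (by nlinarith)
      calc Real.exp (2*χ*x) * (F x / F 0)^2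
          ≤ Real.exp (2*x) * Real.exp (2*ρ+x)^2 := by
            apply mul_le_mul h3 h2 (by positivity) (by positivity)
        _ = Real.exp (2*x + ((2*ρ+x) + (2*ρ+x))) := by
            rw [sq, ← Real.exp_add, ← Real.exp_add]
        _ ≤ Real.exp (12*ρ) := Real.exp_le_exp.mpr (by nlinarith)
    calc I ≤ ∫ _ in (0:ℝ)..t, Real.exp (12*ρ) :=
          intervalIntegral.integral_mono_on ht0.le hI intervalIntegrable_const hle
      _ = t * Real.exp (12*ρ) := by rw [intervalIntegral.integral_const]; simp
  have hid := hId t ht0.le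
  rw [← hIdef] at hid
  clear_value I
  clear hIdef hI h1 hint hId hS hFmeas hFbound
  have he16pos : 0 < Real.exp (16*ρ) := Real.exp_pos _
  have hem8pos : 0 < Real.exp (-8*ρ) := Real.exp_pos _
  have he8pos : 0 < Real.exp (8*ρ) := Real.exp_pos _
  have hinv8 : Real.exp (-8*ρ) * Real.exp (8*ρ) = 1 := by
    rw [← Real.exp_add]; norm_num
  have hexp8 : Real.exp (-8*ρ) * (1 + 8*ρ) ≤ 1 := by
    have h := Real.add_one_le_exp (8*ρ)
    have h2 : Real.exp (-8*ρ) * (8*ρ + 1) ≤ Real.exp (-8*ρ) * Real.exp (8*ρ) :=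
      mul_le_mul_of_nonneg_left h hem8pos.le
    rw [hinv8] at h2
    linarith
  have hinv16 : Real.exp (-16*ρ) * Real.exp (16*ρ) = 1 := by
    rw [← Real.exp_add]; norm_num
  have hexp16 : (1 - 16*ρ) * Real.exp (16*ρ) ≤ 1 := by
    have h := Real.add_one_le_exp (-16*ρ)
    have h2 : (-16*ρ + 1) * Real.exp (16*ρ) ≤ Real.exp (-16*ρ) * Real.exp (16*ρ) :=
      mul_le_mul_of_nonneg_right h he16pos.le
    rw [hinv16] at h2
    linarith
  have hprod : Real.exp (4*ρ) * Real.exp (12*ρ) = Real.exp (16*ρ) := by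
    rw [← Real.exp_add]; ring_nf
  -- bound 4 e^{4ρ} I ≤ 8 ρ e^{16ρ}
  have hIb : 4 * Real.exp (4*ρ) * I ≤ 8 * ρ * Real.exp (16*ρ) := by
    calc 4 * Real.exp (4*ρ) * I ≤ 4 * Real.exp (4*ρ) * (t * Real.exp (12*ρ)) := by
          apply mul_le_mul_of_nonneg_left hIle (by positivity)
      _ = 4 * t * (Real.exp (4*ρ) * Real.exp (12*ρ)) := by ring
      _ = 4 * t * Real.exp (16*ρ) := by rw [hprod]
      _ ≤ 8 * ρ * Real.exp (16*ρ) :=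
          mul_le_mul_of_nonneg_right (by linarith) he16pos.le
  have hem8le1 : Real.exp (-8*ρ) ≤ 1 := by nlinarith [hexp8, hem8pos, hρ0]
  have hkey : Real.exp (-8*ρ) < 1 - 4*ρ*Real.exp (16*ρ) :=
    pesin_aux_key ρ _ _ hρ0 hρ hem8pos he16pos hexp8 hexp16
  have hApos : Real.exp (-8*ρ) * S 0 ^ 2 <
      Real.exp (2*χ*t) * (F t / F 0)^2 * S t ^ 2 := by
    have hA : Real.exp (2*χ*t) * (F t / F 0)^2 * S t ^ 2
        = S 0 ^ 2 - 4 * Real.exp (4*ρ) * I := by linarith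
    rw [hA]
    nlinarith [mul_nonneg (sub_nonneg.mpr hem8le1) (sub_nonneg.mpr hS0sq)]
  have hStpos : 0 < S t := by
    rcases lt_or_eq_of_le hStnonneg with h | h
    · exact h
    · exfalso
      have h0 : Real.exp (2*χ*t) * (F t / F 0)^2 * S t ^ 2 = 0 := by
        rw [← h]; ring
      rw [h0] at hApos
      have hge : (0:ℝ) ≤ Real.exp (-8*ρ) * S 0 ^ 2 := by positivity
      linarith
  set R := Real.exp (χ*t) * (F t / F 0) * (S t / S 0) with hRdef
  have hRpos : 0 < R := by
    have := Real.exp_pos (χ*t); positivity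
  have he2 : Real.exp (χ*t) ^ 2 = Real.exp (2*χ*t) := by
    rw [sq, ← Real.exp_add]; ring_nf
  have hR2 : R^2 = Real.exp (2*χ*t) * (F t / F 0)^2 * S t^2 / S 0 ^2 := by
    rw [hRdef, mul_pow, mul_pow, he2, div_pow]
    ring
  clear_value R
  constructor
  · -- lower bound
    have hsq : Real.exp (-4*ρ) ^ 2 < R ^ 2 := by
      have he : Real.exp (-4*ρ) ^2 = Real.exp (-8*ρ) := by
        rw [sq, ← Real.exp_add]; ring_nf
      rw [he, hR2, lt_div_iff₀ (by positivity)]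
      exact hApos
    exact lt_of_pow_lt_pow_left₀ 2 hRpos.le hsq
  · -- upper bound
    have hsq : R ^ 2 < 1 := by
      rw [hR2, div_lt_one (by positivity)]
      have h4 : 0 < 4 * Real.exp (4*ρ) * I := by positivity
      linarith
    have h1 : R ^ 2 < 1 ^ 2 := by rw [one_pow]; exact hsq
    exact lt_of_pow_lt_pow_left₀ 2 zero_le_one h1
end
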